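/- arXiv:1709.03965 — 3 statements merged into one kernel-verified Lean document; each statement's English description precedes it below -/
import Mathlib

section
/- For every ε > 0, the function τ ↦ g(τ, ε) is convex on ℝ. -/
/-- The penalty function `g(τ, ε)` from the paper. -/
noncomputable def g (τ ε : ℝ) : ℝ :=
  if τ ≤ -(2/3) * ε then 0
  else if τ ≤ (1/3) * ε then (1/(3*ε^2)) * (τ + (2/3)*ε)^3
  else τ

/-- The derivative of the penalty function. -/
noncomputable def gderiv (τ ε : ℝ) : ℝ :=
  if τ ≤ -(2/3) * ε then 0
  else if τ ≤ (1/3) * ε then (1/ε^2) * (τ + (2/3)*ε)^2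
  else 1

lemma cubic_hasDerivAt (ε τ : ℝ) :
    HasDerivAt (fun t : ℝ => (1/(3*ε^2)) * (t + (2/3)*ε)^3)
      ((1/ε^2) * (τ + (2/3)*ε)^2) τ := by
  have h : HasDerivAt (fun t : ℝ => (1/(3*ε^2)) * (t + (2/3)*ε)^3)
      ((1/(3*ε^2)) * ((3:ℕ) * (τ + (2/3)*ε)^(3-1) * 1)) τ :=
    (((hasDerivAt_id τ).add_const ((2/3)*ε)).pow 3).const_mul _
  convert h using 1
  ring

lemma g_eq_zero (ε : ℝ) : ∀ τ, τ ≤ -(2/3) * ε → g τ ε = 0 := by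
  intro τ hτ
  simp only [g, if_pos hτ]

lemma g_eq_cubic (ε : ℝ) (hε : 0 < ε) :
    ∀ τ, -(2/3) * ε ≤ τ → τ ≤ (1/3) * ε →
      g τ ε = (1/(3*ε^2)) * (τ + (2/3)*ε)^3 := by
  intro τ h1 h2
  unfold g
  by_cases h : τ ≤ -(2/3) * ε
  · have : τ = -(2/3) * ε := le_antisymm h h1
    rw [if_pos h, this]
    ring
  · rw [if_neg h, if_pos h2]

lemma g_eq_id (ε : ℝ) (hε : 0 < ε) : ∀ τ, (1/3) * ε ≤ τ → g τ ε = τ := by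
  intro τ hτ'
  unfold g
  by_cases h : τ ≤ -(2/3) * ε
  · nlinarith
  · rw [if_neg h]
    by_cases h2 : τ ≤ (1/3) * ε
    · have hτε : τ = (1/3) * ε := le_antisymm h2 hτ'
      rw [if_pos h2, hτε]
      field_simp
      ring
    · rw [if_neg h2]

lemma g_hasDerivAt (ε : ℝ) (hε : 0 < ε) (τ : ℝ) :
    HasDerivAt (fun t => g t ε) (gderiv τ ε) τ := by
  have hab : -(2/3) * ε < (1/3) * ε := by nlinarith
  rcases lt_trichotomy τ (-(2/3) * ε) with h | h | h
  · -- τ < a : locally zero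
    have hval : gderiv τ ε = 0 := by
      simp only [gderiv]; rw [if_pos h.le]
    rw [hval]
    refine (hasDerivAt_const τ (0:ℝ)).congr_of_eventuallyEq ?_
    filter_upwards [Iio_mem_nhds h] with t ht
    exact g_eq_zero ε t (le_of_lt ht)
  · -- τ = a : junction point
    subst h
    have hval : gderiv (-(2/3) * ε) ε = 0 := by
      simp only [gderiv]; rw [if_pos le_rfl]
    rw [hval]
    have h1 : HasDerivWithinAt (fun t => g t ε) 0 (Set.Iic (-(2/3) * ε)) (-(2/3) * ε) :=
      ((hasDerivAt_const _ (0:ℝ)).hasDerivWithinAt).congr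
        (fun x hx => g_eq_zero ε x hx) (g_eq_zero ε _ le_rfl)
    have hc0 : HasDerivAt (fun t : ℝ => (1/(3*ε^2)) * (t + (2/3)*ε)^3) 0 (-(2/3) * ε) := by
      have h0 := cubic_hasDerivAt ε (-(2/3) * ε)
      have hv : (1/ε^2) * ((-(2/3) * ε) + (2/3)*ε)^2 = 0 := by ring
      rwa [hv] at h0
    have h2 : HasDerivWithinAt (fun t => g t ε) 0
        (Set.Icc (-(2/3) * ε) ((1/3) * ε)) (-(2/3) * ε) :=
      (hc0.hasDerivWithinAt).congr
        (fun x hx => g_eq_cubic ε hε x hx.1 hx.2)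
        (g_eq_cubic ε hε _ le_rfl hab.le)
    have hunion : Set.Iic (-(2/3) * ε) ∪ Set.Icc (-(2/3) * ε) ((1/3) * ε)
        = Set.Iic ((1/3) * ε) := by
      ext x
      simp only [Set.mem_union, Set.mem_Iic, Set.mem_Icc]
      constructor
      · rintro (hx | ⟨_, hx⟩)
        · exact le_trans hx hab.le
        · exact hx
      · intro hx
        rcases le_or_gt x (-(2/3) * ε) with h' | h'
        · exact Or.inl h'
        · exact Or.inr ⟨h'.le, hx⟩
    have h3 : HasDerivWithinAt (fun t => g t ε) 0 (Set.Iic ((1/3) * ε)) (-(2/3) * ε) := by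
      rw [← hunion]; exact h1.union h2
    exact h3.hasDerivAt (Iic_mem_nhds hab)
  · rcases lt_trichotomy τ ((1/3) * ε) with h' | h' | h'
    · -- a < τ < b : locally cubic
      have hval : gderiv τ ε = (1/ε^2) * (τ + (2/3)*ε)^2 := by
        simp only [gderiv]; rw [if_neg (not_le.mpr h), if_pos h'.le]
      rw [hval]
      refine (cubic_hasDerivAt ε τ).congr_of_eventuallyEq ?_
      filter_upwards [Ioo_mem_nhds h h'] with t ht
      exact g_eq_cubic ε hε t ht.1.le ht.2.le
    · -- τ = b : junction point
      subst h'
      have hval : gderiv ((1/3) * ε) ε = 1 := by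
        simp only [gderiv]
        rw [if_neg (not_le.mpr hab), if_pos le_rfl]
        have he : ((1/3) * ε) + (2/3)*ε = ε := by ring
        rw [he]
        field_simp
      rw [hval]
      have hc1 : HasDerivAt (fun t : ℝ => (1/(3*ε^2)) * (t + (2/3)*ε)^3) 1 ((1/3) * ε) := by
        have h0 := cubic_hasDerivAt ε ((1/3) * ε)
        have hv : (1/ε^2) * (((1/3) * ε) + (2/3)*ε)^2 = 1 := by
          have he : ((1/3) * ε) + (2/3)*ε = ε := by ring
          rw [he]; field_simp
        rwa [hv] at h0
      have h1 : HasDerivWithinAt (fun t => g t ε) 1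
          (Set.Icc (-(2/3) * ε) ((1/3) * ε)) ((1/3) * ε) :=
        (hc1.hasDerivWithinAt).congr
          (fun x hx => g_eq_cubic ε hε x hx.1 hx.2)
          (g_eq_cubic ε hε _ hab.le le_rfl)
      have h2 : HasDerivWithinAt (fun t => g t ε) 1 (Set.Ici ((1/3) * ε)) ((1/3) * ε) :=
        ((hasDerivAt_id _).hasDerivWithinAt).congr
          (fun x hx => g_eq_id ε hε x hx) (g_eq_id ε hε _ le_rfl)
      have hunion : Set.Icc (-(2/3) * ε) ((1/3) * ε) ∪ Set.Ici ((1/3) * ε)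
          = Set.Ici (-(2/3) * ε) := by
        ext x
        simp only [Set.mem_union, Set.mem_Icc, Set.mem_Ici]
        constructor
        · rintro (⟨hx, _⟩ | hx)
          · exact hx
          · exact le_trans hab.le hx
        · intro hx
          rcases le_or_gt x ((1/3) * ε) with h'' | h''
          · exact Or.inl ⟨hx, h''⟩
          · exact Or.inr h''.le
      have h3 : HasDerivWithinAt (fun t => g t ε) 1 (Set.Ici (-(2/3) * ε)) ((1/3) * ε) := by
        rw [← hunion]; exact h1.union h2
      exact h3.hasDerivAt (Ici_mem_nhds hab)
    · -- τ > b : locally id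
      have hval : gderiv τ ε = 1 := by
        simp only [gderiv]
        rw [if_neg (not_le.mpr h), if_neg (not_le.mpr h')]
      rw [hval]
      refine (hasDerivAt_id τ).congr_of_eventuallyEq ?_
      filter_upwards [Ioi_mem_nhds h'] with t ht
      exact g_eq_id ε hε t (le_of_lt ht)

lemma gderiv_monotone (ε : ℝ) (hε : 0 < ε) : Monotone (fun τ => gderiv τ ε) := by
  intro x y hxy
  simp only [gderiv]
  have hε2 : (0:ℝ) < ε^2 := by positivity
  split_ifs with h1 h2 h3 h4 h5 h6 h7
  · exact le_rfl
  · positivity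
  · norm_num
  · linarith
  · -- mid ≤ mid
    have hc : 0 ≤ x + (2/3)*ε := by nlinarith [not_le.mp h1]
    exact mul_le_mul_of_nonneg_left
      (pow_le_pow_left₀ hc (by linarith) 2) (by positivity)
  · -- mid ≤ 1
    have hc : 0 ≤ x + (2/3)*ε := by nlinarith [not_le.mp h1]
    have hx2 : (x + (2/3)*ε)^2 ≤ ε^2 := by nlinarith
    calc (1/ε^2) * (x + (2/3)*ε)^2 ≤ (1/ε^2) * ε^2 :=
          mul_le_mul_of_nonneg_left hx2 (by positivity)
      _ = 1 := by field_simp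
  · linarith
  · -- 1 ≤ mid : impossible since x ≤ y and b < x ≤ y would force y > b
    exfalso
    exact ‹¬ x ≤ (1/3) * ε› (le_trans hxy ‹y ≤ (1/3) * ε›)
  · exact le_rfl

/-- For every `ε > 0`, the function `τ ↦ g(τ, ε)` is convex on `ℝ`. -/
theorem stmt_4 (ε : ℝ) (hε : 0 < ε) :
    ConvexOn ℝ Set.univ (fun τ => g τ ε) := by
  have hdiff : Differentiable ℝ (fun τ => g τ ε) :=
    fun τ => (g_hasDerivAt ε hε τ).differentiableAt
  have hderiv : deriv (fun τ => g τ ε) = fun τ => gderiv τ ε := by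
    funext τ
    exact (g_hasDerivAt ε hε τ).deriv
  apply Monotone.convexOn_univ_of_deriv hdiff
  rw [hderiv]
  exact gderiv_monotone ε hε
end

section
/- For every ε > 0 and every τ ∈ ℝ, the gap between the penalized and unpenalized functions satisfies 0 ≤ g(τ, ε) − max(τ, 0) ≤ (8/81)·ε, and the upper bound is attained at τ = 0, where g(0, ε) = (8/81)·ε. -/
/-- For every `ε > 0` and every `τ ∈ ℝ`, the gap between the penalized and unpenalized
functions satisfies `0 ≤ g(τ, ε) − max(τ, 0) ≤ (8/81)·ε`, and the upper bound is attained
at `τ = 0`, where `g(0, ε) = (8/81)·ε`. -/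
theorem stmt_8 (ε : ℝ) (hε : 0 < ε) :
    (∀ τ : ℝ, 0 ≤ g τ ε - max τ 0 ∧ g τ ε - max τ 0 ≤ (8/81) * ε) ∧
    g 0 ε = (8/81) * ε := by
  have hε2 : (0:ℝ) < 3 * ε ^ 2 := by positivity
  constructor
  · intro τ
    unfold g
    split_ifs with h1 h2
    · have hτ : τ ≤ 0 := by linarith
      rw [max_eq_right hτ]
      constructor <;> nlinarith
    · push_neg at h1
      have key : 1/(3*ε^2) * (τ + (2/3)*ε)^3 = (τ + (2/3)*ε)^3 / (3*ε^2) := by ring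
      have hu0 : 0 ≤ τ + (2/3)*ε := by linarith
      rcases le_or_gt τ 0 with hτ | hτ
      · rw [max_eq_right hτ, key]
        constructor
        · rw [sub_zero]; positivity
        · rw [sub_zero, div_le_iff₀ hε2]
          nlinarith [mul_nonneg (neg_nonneg.2 hτ) (sq_nonneg (τ + (2/3)*ε)),
            mul_nonneg (neg_nonneg.2 hτ) (mul_nonneg (neg_nonneg.2 hτ) hu0), sq_nonneg τ]
      · rw [max_eq_left hτ.le, key]
        constructor
        · rw [sub_nonneg, le_div_iff₀ hε2]
          nlinarith [mul_nonneg (sq_nonneg (τ - (1/3)*ε)) (show (0:ℝ) ≤ τ + (8/3)*ε by linarith)]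
        · rw [sub_le_iff_le_add, div_le_iff₀ hε2]
          have hq : 0 ≤ 23/9*ε^2 - (τ+(2/3)*ε)^2 - (2/3)*ε*(τ+(2/3)*ε) := by nlinarith
          nlinarith [mul_nonneg hτ.le hq]
    · rw [max_eq_left (by linarith)]
      constructor <;> linarith
  · unfold g
    rw [if_neg (by nlinarith), if_pos (by nlinarith)]
    field_simp
    ring
end

section
/- The gap between the penalized and basic objectives is uniformly bounded: for any voltages and flow magnitudes, 0 ≤ ℒ' − ℒ ≤ (8/81)·ξ·( μ·v̄·|N^l| + (1/k)·Σ_{(i,j) ∈ E} S̄_ij ), where |N^l| is the number of load buses. -/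
/-- The basic contingency objective `ℒ`. -/
noncomputable def Lobj {Nl E : Type*} [Fintype Nl] [Fintype E]
    (μ k vbar : ℝ) (V : Nl → ℝ) (Smag Sbar : E → ℝ) : ℝ :=
  μ * ∑ l, max (|V l - 1| - vbar) 0 + (1/k) * ∑ e, max (Smag e - Sbar e) 0

/-- The penalized contingency objective `ℒ'` with shape parameter `ξ`. -/
noncomputable def Lobj' {Nl E : Type*} [Fintype Nl] [Fintype E]
    (μ k vbar ξ : ℝ) (V : Nl → ℝ) (Smag Sbar : E → ℝ) : ℝ :=
  μ * ∑ l, g (|V l - 1| - vbar) (ξ * vbar) +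
    (1/k) * ∑ e, g (Smag e - Sbar e) (ξ * Sbar e)

lemma g_bounds (τ ε : ℝ) (hε : 0 < ε) :
    max τ 0 ≤ g τ ε ∧ g τ ε ≤ max τ 0 + 8/81 * ε := by
  have hε2 : (0:ℝ) < 3 * ε ^ 2 := by positivity
  unfold g
  split_ifs with h1 h2
  · have hτ : τ ≤ 0 := by nlinarith
    constructor
    · exact max_le hτ le_rfl
    · have : (0:ℝ) ≤ max τ 0 := le_max_right _ _
      linarith
  · push_neg at h1
    rcases le_or_gt τ 0 with hτ | hτ
    · rw [max_eq_right hτ]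
      have hb : (0:ℝ) ≤ τ + 2/3*ε := by linarith
      constructor
      · exact mul_nonneg (by positivity) (pow_nonneg hb 3)
      · rw [div_mul_eq_mul_div, one_mul, div_le_iff₀ hε2]
        nlinarith [sq_nonneg (τ + 2/3*ε), sq_nonneg τ, sq_nonneg ε, mul_nonneg hb (sq_nonneg ε)]
    · rw [max_eq_left hτ.le]
      constructor
      · rw [div_mul_eq_mul_div, one_mul, le_div_iff₀ hε2]
        nlinarith [sq_nonneg (τ - 1/3*ε), sq_nonneg (τ + 2/3*ε)]
      · rw [div_mul_eq_mul_div, one_mul, div_le_iff₀ hε2]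
        nlinarith [mul_nonneg hτ.le (mul_nonneg (by linarith : (0:ℝ) ≤ 1/3*ε - τ)
            (by linarith : (0:ℝ) ≤ τ + 7/3*ε)), mul_nonneg hτ.le (sq_nonneg ε)]
  · push_neg at h1 h2
    have hτ : 0 < τ := by nlinarith
    rw [max_eq_left hτ.le]
    constructor
    · exact le_rfl
    · linarith

/-- The gap between the penalized and basic objectives is uniformly bounded:
`0 ≤ ℒ' − ℒ ≤ (8/81)·ξ·(μ·v̄·|N^l| + (1/k)·Σ_{(i,j)∈E} S̄_ij)`. -/
theorem stmt_12 {Nl E : Type*} [Fintype Nl] [Fintype E]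
    (μ k vbar ξ : ℝ) (hμ : 0 < μ) (hk : 0 < k) (hv : 0 < vbar)
    (hξ : 0 < ξ) (hξ1 : ξ ≤ 1)
    (V : Nl → ℝ) (Smag Sbar : E → ℝ) (hS : ∀ e, 0 < Sbar e) :
    0 ≤ Lobj' μ k vbar ξ V Smag Sbar - Lobj μ k vbar V Smag Sbar ∧
    Lobj' μ k vbar ξ V Smag Sbar - Lobj μ k vbar V Smag Sbar ≤
      (8/81) * ξ * (μ * vbar * (Fintype.card Nl) + (1/k) * ∑ e, Sbar e) := by
  have hA : ∀ l : Nl, max (|V l - 1| - vbar) 0 ≤ g (|V l - 1| - vbar) (ξ * vbar) ∧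
      g (|V l - 1| - vbar) (ξ * vbar) ≤ max (|V l - 1| - vbar) 0 + 8/81 * (ξ * vbar) :=
    fun l => g_bounds _ _ (by positivity)
  have hB : ∀ e : E, max (Smag e - Sbar e) 0 ≤ g (Smag e - Sbar e) (ξ * Sbar e) ∧
      g (Smag e - Sbar e) (ξ * Sbar e) ≤ max (Smag e - Sbar e) 0 + 8/81 * (ξ * Sbar e) :=
    fun e => g_bounds _ _ (by have := hS e; positivity)
  have hA1 : ∑ l, max (|V l - 1| - vbar) 0 ≤ ∑ l, g (|V l - 1| - vbar) (ξ * vbar) :=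
    Finset.sum_le_sum fun l _ => (hA l).1
  have hA2 : ∑ l, g (|V l - 1| - vbar) (ξ * vbar) ≤
      ∑ l, (max (|V l - 1| - vbar) 0 + 8/81 * (ξ * vbar)) :=
    Finset.sum_le_sum fun l _ => (hA l).2
  have hB1 : ∑ e, max (Smag e - Sbar e) 0 ≤ ∑ e, g (Smag e - Sbar e) (ξ * Sbar e) :=
    Finset.sum_le_sum fun e _ => (hB e).1
  have hB2 : ∑ e, g (Smag e - Sbar e) (ξ * Sbar e) ≤
      ∑ e, (max (Smag e - Sbar e) 0 + 8/81 * (ξ * Sbar e)) :=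
    Finset.sum_le_sum fun e _ => (hB e).2
  rw [Finset.sum_add_distrib, Finset.sum_const, Finset.card_univ] at hA2
  rw [Finset.sum_add_distrib, ← Finset.mul_sum, ← Finset.mul_sum] at hB2
  have hk' : (0:ℝ) < 1/k := by positivity
  unfold Lobj Lobj'
  constructor
  · nlinarith [mul_le_mul_of_nonneg_left hA1 hμ.le, mul_le_mul_of_nonneg_left hB1 hk'.le]
  · simp only [nsmul_eq_mul] at hA2
    have h1 := mul_le_mul_of_nonneg_left hA2 hμ.le
    have h2 := mul_le_mul_of_nonneg_left hB2 hk'.le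
    nlinarith [h1, h2]
end
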